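/- Let n ≥ 1, let T ∈ ℝ^{n×n} be the tridiagonal Toeplitz matrix with 2 on the diagonal and −1 on the first sub- and superdiagonals, let U ∈ ℝ^{n×2} have columns √2·e₁ and √2·e_n, and let M = (I + T⁻¹U (T⁻¹U)ᵗ)⁻¹. Then every diagonal entry of M is strictly positive; explicitly, for 1 ≤ i ≤ n, m_{i,i} = (n³ − n² − 3n − 3)/((n+1)(n² + 2n + 3)) + 12i/(n² + 2n + 3) − 12i²/((n+1)(n² + 2n + 3)) > 0. -/

import Mathlib

open scoped ENNReal
open Matrix

/-- The `n × n` tridiagonal Toeplitz matrix `tridiag(-1, 2, -1)`. -/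
def Tmat (n : ℕ) : Matrix (Fin n) (Fin n) ℝ :=
  Matrix.of fun i j =>
    if (i : ℕ) = (j : ℕ) then 2
    else if (j : ℕ) = (i : ℕ) + 1 ∨ (i : ℕ) = (j : ℕ) + 1 then -1
    else 0

/-- The `n × 2` matrix whose columns are `√2·e₁` and `√2·eₙ`. -/
noncomputable def Umat (n : ℕ) : Matrix (Fin n) (Fin 2) ℝ :=
  Matrix.of fun i k =>
    if k = 0 then (if (i : ℕ) = 0 then Real.sqrt 2 else 0)
    else (if (i : ℕ) = n - 1 then Real.sqrt 2 else 0)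

/-!
`T⁻¹` is the Green's function of the discrete Dirichlet problem,
`(T⁻¹)_{kj} = (min k j + 1)(n - max k j)/(n + 1)` with 0-based indices: its second differences
in `k` vanish except at `k = j`, and it vanishes at `k = -1` and `k = n`. Hence `T⁻¹U = √2 B`,
where the columns of `B = greenEnds n` are the first and last columns of `T⁻¹`, both affine in
the row index.
The Woodbury identity turns `(I + 2BBᵀ)⁻¹` into `I - 2BCBᵀ`, where `C` inverts the explicit
`2 × 2` matrix `I + 2BᵀB`; the diagonal of `I - 2BCBᵀ` is the stated quadratic in `i`.
Positivity needs no computation: `I + AAᵀ` is positive definite, hence so is its inverse.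
-/

theorem inv_one_add_mul_transpose {m k R : Type*} [Fintype m] [Fintype k] [DecidableEq m]
    [DecidableEq k] [CommRing R] {A : Matrix m k R} {C : Matrix k k R}
    (hC : (1 + Aᵀ * A) * C = 1) : (1 + A * Aᵀ)⁻¹ = 1 - A * C * Aᵀ := by
  have h := add_mul_mul_inv_eq_sub 1 A 1 Aᵀ isUnit_one isUnit_one
    (by simpa using (isUnit_iff_isUnit_det _).mpr (isUnit_det_of_right_inverse hC))
  simpa [inv_eq_right_inv hC] using h

theorem diag_pos_inv_one_add_mul_transpose {m k : Type*} [Fintype m] [Fintype k]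
    [DecidableEq m] (A : Matrix m k ℝ) (i : m) : 0 < (1 + A * Aᵀ : Matrix m m ℝ)⁻¹ i i := by
  have h := posSemidef_self_mul_conjTranspose A
  rw [conjTranspose_eq_transpose_of_trivial] at h
  exact (PosDef.one.add_posSemidef h).inv.diag_pos

theorem sum_fin_ite_intCast_eq {n : ℕ} (f : ℤ → ℝ) (m : ℤ)
    (hf : m < 0 ∨ n ≤ m → f m = 0) :
    ∑ k : Fin n, (if (k : ℤ) = m then f k else 0) = f m := by
  by_cases hm : 0 ≤ m ∧ m < n
  · lift m to ℕ using hm.1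
    rw [Fintype.sum_eq_single ⟨m, by omega⟩ fun k hk => if_neg ?_, if_pos rfl]
    simpa [Fin.ext_iff] using hk
  · rw [hf (by omega)]
    exact Finset.sum_eq_zero fun k _ => if_neg (by omega)

theorem sum_fin_affine_mul_affine (n : ℕ) (a b c d : ℝ) :
    ∑ k : Fin n, (a + b * k) * (c + d * k) =
      a * c * n + (a * d + b * c) * (n * (n - 1) / 2) +
        b * d * (n * (n - 1) * (2 * n - 1) / 6) := by
  rw [Fin.sum_univ_eq_sum_range (fun k : ℕ => (a + b * k) * (c + d * k))]
  induction n with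
  | zero => simp
  | succ n ih => rw [Finset.sum_range_succ, ih]; push_cast; ring

noncomputable def green (n : ℕ) (k j : ℤ) : ℝ := ((min k j + 1) * (n - max k j) : ℤ) / (n + 1)

theorem green_of_le (n : ℕ) {k j : ℤ} (h : k ≤ j) :
    green n k j = (k + 1) * (n - j) / (n + 1) := by
  simp [green, min_eq_left h, max_eq_right h]

theorem green_of_ge (n : ℕ) {k j : ℤ} (h : j ≤ k) :
    green n k j = (j + 1) * (n - k) / (n + 1) := by
  simp [green, min_eq_right h, max_eq_left h]

theorem green_neg_one_left (n : ℕ) {j : ℤ} (hj : 0 ≤ j) : green n (-1) j = 0 := by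
  simp [green_of_le n (by omega : -1 ≤ j)]

theorem green_natCast_left (n : ℕ) {j : ℤ} (hj : j ≤ n) : green n n j = 0 := by
  simp [green_of_ge n hj]

theorem green_second_diff (n : ℕ) (i j : ℤ) :
    2 * green n i j - green n (i - 1) j - green n (i + 1) j = if i = j then 1 else 0 := by
  have key : 2 * ((min i j + 1) * (n - max i j)) - (min (i - 1) j + 1) * (n - max (i - 1) j)
      - (min (i + 1) j + 1) * (n - max (i + 1) j) = if i = j then (n + 1 : ℤ) else 0 := by
    obtain h | rfl | rfl | h : i < j ∨ i = j ∨ i = j + 1 ∨ j + 1 < i := by omega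
    all_goals simp only [min_def, max_def]; split_ifs <;> first | omega | ring
  unfold green
  split_ifs at key ⊢ <;> field_simp <;> exact_mod_cast key

theorem Tmat_mulVec_apply {n : ℕ} (f : ℤ → ℝ) (h₀ : f (-1) = 0) (hₙ : f n = 0)
    (i : Fin n) :
    (Tmat n *ᵥ fun k => f k) i = 2 * f i - f (i - 1) - f (i + 1) := by
  have h (k : Fin n) : Tmat n i k * f k = 2 * (if (k : ℤ) = i then f k else 0)
      - (if (k : ℤ) = i - 1 then f k else 0) - (if (k : ℤ) = i + 1 then f k else 0) := by
    simp only [Tmat, of_apply]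
    split_ifs <;> first | omega | ring
  simp only [mulVec, dotProduct, h, Finset.sum_sub_distrib, ← Finset.mul_sum]
  rw [sum_fin_ite_intCast_eq, sum_fin_ite_intCast_eq, sum_fin_ite_intCast_eq] <;> intro <;>
    first | omega | grind

theorem Tmat_mul_green (n : ℕ) : Tmat n * of (fun k j : Fin n => green n k j) = 1 := by
  ext i j
  have hcol := Tmat_mulVec_apply (fun k => green n k j) (green_neg_one_left n (by omega))
    (green_natCast_left n (by omega)) i
  rw [green_second_diff] at hcol
  rw [mul_apply, one_apply]
  simpa [mulVec, dotProduct, Fin.ext_iff] using hcol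

theorem Tmat_inv (n : ℕ) : (Tmat n)⁻¹ = of fun k j : Fin n => green n k j :=
  inv_eq_right_inv (Tmat_mul_green n)

noncomputable def greenEnds (n : ℕ) : Matrix (Fin n) (Fin 2) ℝ :=
  of fun k => ![(n - k) / (n + 1), (k + 1) / (n + 1)]

theorem Tmat_inv_mul_Umat (n : ℕ) : (Tmat n)⁻¹ * Umat n = √2 • greenEnds n := by
  ext k c
  obtain ⟨m, rfl⟩ := Nat.exists_eq_add_one_of_ne_zero k.pos.ne'
  rw [Tmat_inv, mul_apply, Matrix.smul_apply, smul_eq_mul]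
  fin_cases c <;> simp only [Fin.zero_eta, Fin.mk_one]
  · rw [Fintype.sum_eq_single 0 fun j hj => by simp [Umat, hj], of_apply,
      green_of_ge _ (by simp)]
    simp only [Umat, greenEnds, of_apply, Fin.val_zero, Fin.val_eq_zero_iff, if_true, cons_val_zero,
      Nat.cast_zero, Int.cast_zero, Int.cast_natCast, zero_add, one_mul, Nat.cast_add, Nat.cast_one]
    ring
  · rw [Fintype.sum_eq_single (Fin.last m) fun j hj => by
      simp only [Umat, of_apply, if_neg one_ne_zero, Nat.add_sub_cancel]
      rw [if_neg (fun h => hj (Fin.ext h) : (j : ℕ) ≠ m), mul_zero], of_apply,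
      green_of_le _ (by simpa using Fin.is_le k)]
    simp only [Umat, greenEnds, of_apply, Fin.val_last, add_tsub_cancel_right, if_neg one_ne_zero,
      if_true, cons_val_one, cons_val_fin_one, Int.cast_natCast, Nat.cast_add, Nat.cast_one,
      add_sub_cancel_left, mul_one]
    ring

theorem greenEnds_gram (n : ℕ) : (greenEnds n)ᵀ * greenEnds n =
    (n / (6 * (n + 1)) : ℝ) • !![2 * (n : ℝ) + 1, n + 2; n + 2, 2 * n + 1] := by
  have hn : (n + 1 : ℝ) ≠ 0 := by positivity
  have h₀ (k : Fin n) : greenEnds n k 0 = n / (n + 1) + -1 / (n + 1) * k := by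
    simp only [greenEnds, of_apply, cons_val_zero]; ring
  have h₁ (k : Fin n) : greenEnds n k 1 = 1 / (n + 1) + 1 / (n + 1) * k := by
    simp only [greenEnds, of_apply, cons_val_one, cons_val_fin_one]; ring
  ext c d
  fin_cases c <;> fin_cases d <;>
    simp only [Fin.zero_eta, Fin.mk_one, mul_apply, transpose_apply, h₀, h₁,
      sum_fin_affine_mul_affine, Matrix.smul_apply, of_apply, cons_val', cons_val_zero,
      cons_val_one, cons_val_fin_one, smul_eq_mul] <;>
    field_simp <;> ring

/-- The second factor is the adjugate of
`1 + 2 BᵀB = (3 (n + 1))⁻¹ • !![2n² + 4n + 3, n(n + 2); n(n + 2), 2n² + 4n + 3]`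
divided by its determinant `(n² + 2n + 3) / 3`. -/
theorem one_add_gram_greenEnds_mul_eq_one (n : ℕ) :
    (1 + (√2 • greenEnds n)ᵀ * (√2 • greenEnds n)) *
      ((((n : ℝ) + 1) * (n ^ 2 + 2 * n + 3))⁻¹ •
        (!![2 * n ^ 2 + 4 * n + 3, -(n * (n + 2)); -(n * (n + 2)), 2 * n ^ 2 + 4 * n + 3] :
          Matrix (Fin 2) (Fin 2) ℝ)) = 1 := by
  have h₁ : (n + 1 : ℝ) ≠ 0 := by positivity
  have h₂ : ((n : ℝ) ^ 2 + 2 * n + 3) ≠ 0 := by positivity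
  have h₃ : (√2 • greenEnds n)ᵀ * (√2 • greenEnds n) =
      (2 : ℝ) • ((greenEnds n)ᵀ * greenEnds n) := by
    rw [transpose_smul, Matrix.smul_mul, Matrix.mul_smul, smul_smul, Real.mul_self_sqrt zero_le_two]
  rw [h₃, greenEnds_gram]
  ext c d
  fin_cases c <;> fin_cases d <;>
    simp only [Fin.zero_eta, Fin.mk_one, smul_of, smul_cons, smul_eq_mul, smul_empty, mul_apply,
      Matrix.add_apply, one_apply, of_apply, cons_val', cons_val_zero, cons_val_one,
      cons_val_fin_one, Fin.sum_univ_two, if_true, zero_ne_one, one_ne_zero, if_false, zero_add] <;>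
    field_simp <;> ring

theorem inv_one_add_Tmat_inv_mul_Umat_apply_self (n : ℕ) (i : Fin n) :
    (1 + (Tmat n)⁻¹ * Umat n * ((Tmat n)⁻¹ * Umat n)ᵀ : Matrix (Fin n) (Fin n) ℝ)⁻¹ i i =
      ((n : ℝ) ^ 3 - (n : ℝ) ^ 2 - 3 * n - 3) /
          (((n : ℝ) + 1) * ((n : ℝ) ^ 2 + 2 * n + 3)) +
        12 * ((i : ℝ) + 1) / ((n : ℝ) ^ 2 + 2 * n + 3) -
        12 * ((i : ℝ) + 1) ^ 2 / (((n : ℝ) + 1) * ((n : ℝ) ^ 2 + 2 * n + 3)) := by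
  have h₁ : (n + 1 : ℝ) ≠ 0 := by positivity
  have h₂ : ((n : ℝ) ^ 2 + 2 * n + 3) ≠ 0 := by positivity
  rw [Tmat_inv_mul_Umat, inv_one_add_mul_transpose (one_add_gram_greenEnds_mul_eq_one n)]
  simp only [greenEnds, smul_of, smul_cons, smul_eq_mul, smul_empty, Matrix.sub_apply,
    one_apply_eq, mul_apply, of_apply, Pi.smul_apply, cons_val', cons_val_zero, cons_val_one,
    cons_val_fin_one, Fin.sum_univ_two, transpose_apply]
  field_simp
  rw [Real.sq_sqrt zero_le_two]
  ring

theorem M_diag_pos_general (n : ℕ) :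
    ∀ i : Fin n,
      ((1 : Matrix (Fin n) (Fin n) ℝ) + (Tmat n)⁻¹ * Umat n * ((Tmat n)⁻¹ * Umat n)ᵀ)⁻¹ i i =
        (let x : ℝ := (i : ℕ) + 1
         ((n : ℝ) ^ 3 - (n : ℝ) ^ 2 - 3 * n - 3) / (((n : ℝ) + 1) * ((n : ℝ) ^ 2 + 2 * n + 3)) +
           12 * x / ((n : ℝ) ^ 2 + 2 * n + 3) -
           12 * x ^ 2 / (((n : ℝ) + 1) * ((n : ℝ) ^ 2 + 2 * n + 3))) ∧
      0 < ((1 : Matrix (Fin n) (Fin n) ℝ) + (Tmat n)⁻¹ * Umat n * ((Tmat n)⁻¹ * Umat n)ᵀ)⁻¹ i i :=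
  fun i => ⟨inv_one_add_Tmat_inv_mul_Umat_apply_self n i,
    diag_pos_inv_one_add_mul_transpose _ i⟩

/-- Every diagonal entry of `M = (I + T⁻¹U (T⁻¹U)ᵗ)⁻¹` is strictly positive;
explicitly (1-based index `i' = i+1`),
`m_{i,i} = (n³-n²-3n-3)/((n+1)(n²+2n+3)) + 12i'/(n²+2n+3) - 12i'²/((n+1)(n²+2n+3)) > 0`. -/
theorem M_diag_pos (n : ℕ) (hn : 1 ≤ n) :
    ∀ i : Fin n,
      ((1 : Matrix (Fin n) (Fin n) ℝ) + (Tmat n)⁻¹ * Umat n * ((Tmat n)⁻¹ * Umat n)ᵀ)⁻¹ i i =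
        (let x : ℝ := (i : ℕ) + 1
         ((n : ℝ) ^ 3 - (n : ℝ) ^ 2 - 3 * n - 3) / (((n : ℝ) + 1) * ((n : ℝ) ^ 2 + 2 * n + 3)) +
           12 * x / ((n : ℝ) ^ 2 + 2 * n + 3) -
           12 * x ^ 2 / (((n : ℝ) + 1) * ((n : ℝ) ^ 2 + 2 * n + 3))) ∧
      0 < ((1 : Matrix (Fin n) (Fin n) ℝ) + (Tmat n)⁻¹ * Umat n * ((Tmat n)⁻¹ * Umat n)ᵀ)⁻¹ i i :=
  M_diag_pos_general n
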